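/- arXiv:2407.12318 — 5 statements merged into one kernel-verified Lean document; each statement's English description precedes it below -/
import Mathlib

section
/- Consider a finite-horizon Markov decision process with horizon T, finite state spaces 𝒳₁, …, 𝒳_T, finite action spaces 𝒰₁, …, 𝒰_T, transition kernels P_t : 𝒳_t × 𝒰_t → Δ(𝒳_{t+1}) and reward functions r_t : 𝒳_t × 𝒰_t → ℝ. Suppose K_t = Ψ_t(X_t) is an information state, i.e., there exist P_t^K : 𝒦_t × 𝒰_t → Δ(𝒦_{t+1}) and r_t^K : 𝒦_t × 𝒰_t → ℝ such that for all x_t, u_t, k_{t+1}: ∑_{x_{t+1} : Ψ_{t+1}(x_{t+1}) = k_{t+1}} P_t(x_{t+1} | x_t, u_t) = P_t^K(k_{t+1} | Ψ_t(x_t), u_t) and r_t(x_t, u_t) = r_t^K(Ψ_t(x_t), u_t). Then the optimal value functions of the two MDPs defined by backward induction satisfy V_t(x_t) = V_t^K(Ψ_t(x_t)) for all t ∈ {1, …, T+1} and all x_t ∈ 𝒳_t, and the state-action value functions satisfy Q_t(x_t, u_t) = Q_t^K(Ψ_t(x_t), u_t) for all t, x_t, u_t. -/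
open Classical Finset

/-- Optimal value function of a finite-horizon MDP, indexed by the number `n` of
remaining decision steps and the current time `t`. -/
noncomputable def mdpV {X U : ℕ → Type*} [∀ t, Fintype (X t)] [∀ t, Fintype (U t)]
    [∀ t, Nonempty (U t)]
    (P : (t : ℕ) → X t → U t → X (t + 1) → ℝ)
    (r : (t : ℕ) → X t → U t → ℝ) : (n : ℕ) → (t : ℕ) → X t → ℝ
  | 0, _, _ => 0
  | n + 1, t, x =>
      Finset.univ.sup' Finset.univ_nonempty
        (fun u : U t => r t x u + ∑ x' : X (t + 1), mdpV P r n (t + 1) x' * P t x u x')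

/-- State-action value function with `n` remaining steps after the current one. -/
noncomputable def mdpQ {X U : ℕ → Type*} [∀ t, Fintype (X t)] [∀ t, Fintype (U t)]
    [∀ t, Nonempty (U t)]
    (P : (t : ℕ) → X t → U t → X (t + 1) → ℝ)
    (r : (t : ℕ) → X t → U t → ℝ) (n t : ℕ) (x : X t) (u : U t) : ℝ :=
  r t x u + ∑ x' : X (t + 1), mdpV P r n (t + 1) x' * P t x u x'

theorem stmt3 {X U K : ℕ → Type*}
    [∀ t, Fintype (X t)] [∀ t, Fintype (U t)] [∀ t, Fintype (K t)]
    [∀ t, Nonempty (U t)]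
    (P : (t : ℕ) → X t → U t → X (t + 1) → ℝ)
    (r : (t : ℕ) → X t → U t → ℝ)
    (Ψ : (t : ℕ) → X t → K t)
    (PK : (t : ℕ) → K t → U t → K (t + 1) → ℝ)
    (rK : (t : ℕ) → K t → U t → ℝ)
    (hP : ∀ (t : ℕ) (x : X t) (u : U t) (k' : K (t + 1)),
      (∑ x' : X (t + 1), if Ψ (t + 1) x' = k' then P t x u x' else 0) = PK t (Ψ t x) u k')
    (hr : ∀ (t : ℕ) (x : X t) (u : U t), r t x u = rK t (Ψ t x) u) :
    (∀ (n t : ℕ) (x : X t),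
        mdpV P r n t x = mdpV (X := K) PK rK n t (Ψ t x)) ∧
    (∀ (n t : ℕ) (x : X t) (u : U t),
        mdpQ P r n t x u = mdpQ (X := K) PK rK n t (Ψ t x) u) := by
  have key : ∀ (n t : ℕ) (x : X t) (u : U t),
      (∀ x' : X (t+1), mdpV P r n (t+1) x' = mdpV (X := K) PK rK n (t+1) (Ψ (t+1) x')) →
      (∑ x' : X (t + 1), mdpV P r n (t + 1) x' * P t x u x')
        = ∑ k' : K (t + 1), mdpV (X := K) PK rK n (t + 1) k' * PK t (Ψ t x) u k' := by
    intro n t x u ih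
    simp_rw [← hP, Finset.mul_sum, mul_ite, mul_zero]
    rw [Finset.sum_comm]
    refine Finset.sum_congr rfl fun x' _ => ?_
    rw [Finset.sum_ite_eq Finset.univ (Ψ (t+1) x')]
    simp [ih x']
  have hV : ∀ (n t : ℕ) (x : X t), mdpV P r n t x = mdpV (X := K) PK rK n t (Ψ t x) := by
    intro n
    induction n with
    | zero => intro t x; rfl
    | succ n ih =>
      intro t x
      simp only [mdpV]
      refine Finset.sup'_congr _ rfl fun u _ => ?_
      rw [hr, key n t x u (fun x' => ih (t+1) x')]
  refine ⟨hV, fun n t x u => ?_⟩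
  simp only [mdpQ]
  rw [hr, key n t x u (fun x' => hV n (t+1) x')]
end

section
/- Consider a finite-horizon MDP with horizon T, finite state spaces 𝒳_t, finite action spaces 𝒰_t, initial distribution ν₁ ∈ Δ(𝒳₁), transition kernels P_t, reward functions r_t, and an information state K_t = Ψ_t(X_t) (with compressed kernels P_t^K and rewards r_t^K as in the definition of information state). Let g = (g_t) be a randomized Markov policy, g_t : 𝒳_t → Δ(𝒰_t), and let ρ = (ρ_t) be the K-based policy associated with g, defined by ρ_t(u | k) = E^g[g_t(u | X_t) | K_t = k] whenever P^g(K_t = k) > 0 (and arbitrarily otherwise). Then: (1) for all t and all k ∈ 𝒦_t, P^g(K_t = k) = P^ρ(K_t = k); and (2) the total expected rewards coincide: E^g[∑_{t=1}^T r_t(X_t, U_t)] = E^ρ[∑_{t=1}^T r_t(X_t, U_t)]. -/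
open Classical Finset

/-- Marginal distribution of the state of a controlled Markov chain at time `t`,
under initial distribution `ν`, transition kernels `P`, and randomized Markov policy `g`. -/
noncomputable def stateDist {X U : ℕ → Type*} [∀ t, Fintype (X t)] [∀ t, Fintype (U t)]
    (ν : X 0 → ℝ) (P : (t : ℕ) → X t → U t → X (t + 1) → ℝ)
    (g : (t : ℕ) → X t → U t → ℝ) : (t : ℕ) → X t → ℝ
  | 0 => ν
  | t + 1 => fun x' => ∑ x : X t, ∑ u : U t, stateDist ν P g t x * g t x u * P t x u x'

/-- Total expected reward over horizon `T` of a randomized Markov policy `g`. -/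
noncomputable def totalReward {X U : ℕ → Type*} [∀ t, Fintype (X t)] [∀ t, Fintype (U t)]
    (ν : X 0 → ℝ) (P : (t : ℕ) → X t → U t → X (t + 1) → ℝ)
    (r : (t : ℕ) → X t → U t → ℝ) (g : (t : ℕ) → X t → U t → ℝ) (T : ℕ) : ℝ :=
  ∑ t ∈ Finset.range T, ∑ x : X t, ∑ u : U t, stateDist ν P g t x * g t x u * r t x u

theorem stmt4 {X U K : ℕ → Type*}
    [∀ t, Fintype (X t)] [∀ t, Fintype (U t)] [∀ t, Fintype (K t)]
    (T : ℕ)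
    (ν : X 0 → ℝ) (hν0 : ∀ x, 0 ≤ ν x) (hν1 : ∑ x, ν x = 1)
    (P : (t : ℕ) → X t → U t → X (t + 1) → ℝ)
    (hP0 : ∀ t (x : X t) (u : U t) (x' : X (t + 1)), 0 ≤ P t x u x')
    (hP1 : ∀ t (x : X t) (u : U t), ∑ x' : X (t + 1), P t x u x' = 1)
    (r : (t : ℕ) → X t → U t → ℝ)
    (Ψ : (t : ℕ) → X t → K t)
    -- `K` is an information state: compressed kernels and rewards
    (PK : (t : ℕ) → K t → U t → K (t + 1) → ℝ)
    (rK : (t : ℕ) → K t → U t → ℝ)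
    (hPK : ∀ t (x : X t) (u : U t) (k' : K (t + 1)),
      (∑ x' : X (t + 1), if Ψ (t + 1) x' = k' then P t x u x' else 0) = PK t (Ψ t x) u k')
    (hrK : ∀ t (x : X t) (u : U t), r t x u = rK t (Ψ t x) u)
    -- the randomized Markov policy `g`
    (g : (t : ℕ) → X t → U t → ℝ)
    (hg0 : ∀ t (x : X t) (u : U t), 0 ≤ g t x u)
    (hg1 : ∀ t (x : X t), ∑ u, g t x u = 1)
    -- the `K`-based policy `ρ` associated with `g`
    (ρ : (t : ℕ) → K t → U t → ℝ)
    (hρ0 : ∀ t (k : K t) (u : U t), 0 ≤ ρ t k u)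
    (hρ1 : ∀ t (k : K t), ∑ u, ρ t k u = 1)
    (hρ : ∀ t (k : K t) (u : U t),
      0 < (∑ x : X t, if Ψ t x = k then stateDist ν P g t x else 0) →
      ρ t k u = (∑ x : X t, if Ψ t x = k then stateDist ν P g t x * g t x u else 0) /
        (∑ x : X t, if Ψ t x = k then stateDist ν P g t x else 0)) :
    (∀ t (k : K t),
        (∑ x : X t, if Ψ t x = k then stateDist ν P g t x else 0) =
        (∑ x : X t, if Ψ t x = k then
            stateDist ν P (fun t x u => ρ t (Ψ t x) u) t x else 0)) ∧
    totalReward ν P r g T = totalReward ν P r (fun t x u => ρ t (Ψ t x) u) T := by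
  have fiberSum : ∀ (t : ℕ) (F : X t → ℝ),
      ∑ x, F x = ∑ k : K t, ∑ x, if Ψ t x = k then F x else 0 := by
    intro t F
    rw [Finset.sum_comm]
    refine Finset.sum_congr rfl fun x _ => ?_
    simp
  have collect : ∀ (t : ℕ) (w : X t → U t → ℝ) (f : K t → U t → ℝ),
      (∑ x, ∑ u, w x u * f (Ψ t x) u)
        = ∑ k, ∑ u, (∑ x, if Ψ t x = k then w x u else 0) * f k u := by
    intro t w f
    rw [fiberSum t (fun x => ∑ u, w x u * f (Ψ t x) u)]
    refine Finset.sum_congr rfl fun k _ => ?_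
    simp only [Finset.sum_mul]
    rw [Finset.sum_comm]
    refine Finset.sum_congr rfl fun x _ => ?_
    by_cases h : Ψ t x = k
    · simp [h]
    · simp [h]
  have hp0 : ∀ (t : ℕ) (x : X t), 0 ≤ stateDist ν P g t x := by
    intro t
    induction t with
    | zero => exact hν0
    | succ t ih =>
      intro x'
      exact Finset.sum_nonneg fun x _ => Finset.sum_nonneg fun u _ =>
        mul_nonneg (mul_nonneg (ih x) (hg0 t x u)) (hP0 t x u x')
  have key : ∀ (t : ℕ) (k : K t) (u : U t),
      (∑ x, if Ψ t x = k then stateDist ν P g t x * g t x u else 0)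
        = ρ t k u * (∑ x, if Ψ t x = k then stateDist ν P g t x else 0) := by
    intro t k u
    have hS0 : 0 ≤ ∑ x, if Ψ t x = k then stateDist ν P g t x else 0 :=
      Finset.sum_nonneg fun x _ => by
        by_cases h : Ψ t x = k <;> simp [h, hp0 t x]
    rcases hS0.lt_or_eq with hS | hS
    · rw [hρ t k u hS, div_mul_cancel₀ _ (ne_of_gt hS)]
    · have hz := (Finset.sum_eq_zero_iff_of_nonneg
        (fun x _ => by by_cases h : Ψ t x = k <;> simp [h, hp0 t x])).mp hS.symm
      rw [← hS, mul_zero]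
      apply Finset.sum_eq_zero
      intro x hx
      have := hz x hx
      by_cases h : Ψ t x = k
      · rw [if_pos h] at this ⊢
        rw [this, zero_mul]
      · rw [if_neg h]
  have step : ∀ (t : ℕ) (k' : K (t + 1)) (π : (t : ℕ) → X t → U t → ℝ),
      (∑ x', if Ψ (t + 1) x' = k' then stateDist ν P π (t + 1) x' else 0)
        = ∑ k, ∑ u, (∑ x, if Ψ t x = k then stateDist ν P π t x * π t x u else 0)
            * PK t k u k' := by
    intro t k' π
    have h1 : (∑ x', if Ψ (t + 1) x' = k' then stateDist ν P π (t + 1) x' else 0)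
        = ∑ x, ∑ u, (stateDist ν P π t x * π t x u) * PK t (Ψ t x) u k' := by
      calc (∑ x', if Ψ (t + 1) x' = k' then stateDist ν P π (t + 1) x' else 0)
          = ∑ x', ∑ x, ∑ u,
              (if Ψ (t + 1) x' = k'
                then stateDist ν P π t x * π t x u * P t x u x' else 0) := by
            refine Finset.sum_congr rfl fun x' _ => ?_
            simp only [stateDist]
            split
            · rfl
            · simp
        _ = ∑ x, ∑ u, ∑ x',
              (if Ψ (t + 1) x' = k'
                then stateDist ν P π t x * π t x u * P t x u x' else 0) := by
            rw [Finset.sum_comm]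
            exact Finset.sum_congr rfl fun x _ => Finset.sum_comm
        _ = ∑ x, ∑ u, (stateDist ν P π t x * π t x u) * PK t (Ψ t x) u k' := by
            refine Finset.sum_congr rfl fun x _ => Finset.sum_congr rfl fun u _ => ?_
            rw [← hPK t x u k', Finset.mul_sum]
            refine Finset.sum_congr rfl fun x' _ => ?_
            split <;> simp [mul_assoc]
    rw [h1, collect t (fun x u => stateDist ν P π t x * π t x u)
      (fun k u => PK t k u k')]
  have main : ∀ (t : ℕ) (k : K t),
      (∑ x, if Ψ t x = k then stateDist ν P g t x else 0)
        = (∑ x, if Ψ t x = k then stateDist ν P (fun t x u => ρ t (Ψ t x) u) t x else 0) := by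
    intro t
    induction t with
    | zero => intro k; rfl
    | succ t ih =>
      intro k'
      rw [step t k' g, step t k' (fun t x u => ρ t (Ψ t x) u)]
      refine Finset.sum_congr rfl fun k _ => Finset.sum_congr rfl fun u _ => ?_
      have h2 : (∑ x, if Ψ t x = k
            then stateDist ν P (fun t x u => ρ t (Ψ t x) u) t x * ρ t (Ψ t x) u else 0)
          = ρ t k u * (∑ x, if Ψ t x = k
              then stateDist ν P (fun t x u => ρ t (Ψ t x) u) t x else 0) := by
        rw [Finset.mul_sum]
        refine Finset.sum_congr rfl fun x _ => ?_
        by_cases h : Ψ t x = k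
        · simp [h, mul_comm]
        · simp [h]
      rw [key t k u, h2, ih k]
  refine ⟨main, ?_⟩
  unfold totalReward
  refine Finset.sum_congr rfl fun t _ => ?_
  have hL : (∑ x, ∑ u, stateDist ν P g t x * g t x u * r t x u)
      = ∑ k, ∑ u, (∑ x, if Ψ t x = k then stateDist ν P g t x * g t x u else 0)
          * rK t k u := by
    rw [← collect t (fun x u => stateDist ν P g t x * g t x u) (fun k u => rK t k u)]
    exact Finset.sum_congr rfl fun x _ => Finset.sum_congr rfl fun u _ => by
      rw [hrK t x u]
  have hR : (∑ x, ∑ u, stateDist ν P (fun t x u => ρ t (Ψ t x) u) t x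
        * ρ t (Ψ t x) u * r t x u)
      = ∑ k, ∑ u, (∑ x, if Ψ t x = k
          then stateDist ν P (fun t x u => ρ t (Ψ t x) u) t x * ρ t (Ψ t x) u else 0)
          * rK t k u := by
    rw [← collect t (fun x u => stateDist ν P (fun t x u => ρ t (Ψ t x) u) t x
      * ρ t (Ψ t x) u) (fun k u => rK t k u)]
    exact Finset.sum_congr rfl fun x _ => Finset.sum_congr rfl fun u _ => by
      rw [hrK t x u]
  rw [hL, hR]
  refine Finset.sum_congr rfl fun k _ => Finset.sum_congr rfl fun u _ => ?_
  have h2 : (∑ x, if Ψ t x = k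
        then stateDist ν P (fun t x u => ρ t (Ψ t x) u) t x * ρ t (Ψ t x) u else 0)
      = ρ t k u * (∑ x, if Ψ t x = k
          then stateDist ν P (fun t x u => ρ t (Ψ t x) u) t x else 0) := by
    rw [Finset.mul_sum]
    refine Finset.sum_congr rfl fun x _ => ?_
    by_cases h : Ψ t x = k
    · simp [h, mul_comm]
    · simp [h]
  rw [key t k u, h2, main t k]
end

section
/- In a finite-horizon MDP with finite state and action spaces, for every history-dependent randomized policy there exists a deterministic Markov policy whose total expected reward is at least as large; in particular, the supremum of total expected reward over all history-dependent randomized policies equals the maximum over deterministic Markov policies, and this maximum equals E_{x₁ ∼ ν₁}[V₁(x₁)] where V is defined by backward induction. -/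
/-!
Backward induction on the horizon, peeling off the first step. Given `(x₁, u₁)`, the rest of a
trajectory is generated by an adapted policy of the MDP with horizon `T - 1` started from
`P₁(· | x₁, u₁)`, while the first action distribution of an adapted policy depends on `x₁` only.
Since `V₁(x₁) ≥ r₁(x₁, u₁) + E[V₂]` for every action `u₁`, induction bounds the reward of every
adapted policy by `E_ν[V₁]`, and the policy that picks a maximizing action at every state
attains this bound. The same recursion produces a solution `V` of the Bellman equations.
-/

open Classical Finset

noncomputable section

/-- Probability of a trajectory `τ = (states, actions)` of a finite-horizon controlled
Markov chain under a (possibly history-dependent) randomized policy `π`. -/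
def trajProb {T : ℕ} {X : Fin (T + 1) → Type*} {U : Fin T → Type*}
    [∀ t, Fintype (X t)] [∀ t, Fintype (U t)]
    (ν : X 0 → ℝ)
    (P : (t : Fin T) → X t.castSucc → U t → X t.succ → ℝ)
    (π : (t : Fin T) → (∀ s, X s) → (∀ s, U s) → U t → ℝ)
    (τ : (∀ t, X t) × (∀ t, U t)) : ℝ :=
  ν (τ.1 0) * ∏ t : Fin T,
    π t τ.1 τ.2 (τ.2 t) * P t (τ.1 t.castSucc) (τ.2 t) (τ.1 t.succ)

/-- Total expected reward of a policy `π`. -/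
def polReward {T : ℕ} {X : Fin (T + 1) → Type*} {U : Fin T → Type*}
    [∀ t, Fintype (X t)] [∀ t, Fintype (U t)]
    (ν : X 0 → ℝ)
    (P : (t : Fin T) → X t.castSucc → U t → X t.succ → ℝ)
    (r : (t : Fin T) → X t.castSucc → U t → ℝ)
    (π : (t : Fin T) → (∀ s, X s) → (∀ s, U s) → U t → ℝ) : ℝ :=
  ∑ τ : (∀ t, X t) × (∀ t, U t),
    trajProb ν P π τ * ∑ t : Fin T, r t (τ.1 t.castSucc) (τ.2 t)

/-- `π` is a valid randomized policy: at each history it picks a probability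
distribution over actions. -/
def ValidPol {T : ℕ} {X : Fin (T + 1) → Type*} {U : Fin T → Type*}
    [∀ t, Fintype (U t)]
    (π : (t : Fin T) → (∀ s, X s) → (∀ s, U s) → U t → ℝ) : Prop :=
  (∀ t xs us u, 0 ≤ π t xs us u) ∧ (∀ t xs us, ∑ u, π t xs us u = 1)

/-- `π` is history-dependent (adapted): its choice at time `t` depends only on the
states up to time `t` and the actions strictly before time `t`. -/
def AdaptedPol {T : ℕ} {X : Fin (T + 1) → Type*} {U : Fin T → Type*}
    (π : (t : Fin T) → (∀ s, X s) → (∀ s, U s) → U t → ℝ) : Prop :=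
  ∀ (t : Fin T) (xs xs' : ∀ s, X s) (us us' : ∀ s, U s),
    (∀ s : Fin (T + 1), s ≤ t.castSucc → xs s = xs' s) →
    (∀ s : Fin T, s < t → us s = us' s) →
    π t xs us = π t xs' us'

/-- The randomized policy induced by a deterministic Markov policy `d`. -/
def detPol {T : ℕ} {X : Fin (T + 1) → Type*} {U : Fin T → Type*}
    (d : (t : Fin T) → X t.castSucc → U t) :
    (t : Fin T) → (∀ s, X s) → (∀ s, U s) → U t → ℝ :=
  fun t xs _ u => if u = d t (xs t.castSucc) then 1 else 0


section Tail

variable {T : ℕ} {X : Fin (T + 2) → Type*} {U : Fin (T + 1) → Type*}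

def tailP (P : (t : Fin (T + 1)) → X t.castSucc → U t → X t.succ → ℝ) :
    (t : Fin T) → X t.castSucc.succ → U t.succ → X t.succ.succ → ℝ :=
  fun t => P t.succ

def tailR (r : (t : Fin (T + 1)) → X t.castSucc → U t → ℝ) :
    (t : Fin T) → X t.castSucc.succ → U t.succ → ℝ :=
  fun t => r t.succ

def tailPol (π : (t : Fin (T + 1)) → (∀ s, X s) → (∀ s, U s) → U t → ℝ) (x0 : X 0) (u0 : U 0) :
    (t : Fin T) → (∀ s : Fin (T + 1), X s.succ) → (∀ s : Fin T, U s.succ) → U t.succ → ℝ :=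
  fun t xs us => π t.succ (Fin.cons x0 xs) (Fin.cons u0 us)

-- Any filler history will do: the first decision of an adapted policy only sees `x0`.
def headPol [∀ t, Nonempty (X t)] [∀ t, Nonempty (U t)]
    (π : (t : Fin (T + 1)) → (∀ s, X s) → (∀ s, U s) → U t → ℝ) (x0 : X 0) : U 0 → ℝ :=
  π 0 (Fin.cons x0 fun _ => Classical.arbitrary _) fun _ => Classical.arbitrary _

lemma cons_castSucc_succ (x0 : X 0) (xs : ∀ s : Fin (T + 1), X s.succ) (t : Fin T) :
    Fin.cons (α := X) x0 xs t.succ.castSucc = xs t.castSucc :=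
  Fin.cons_succ x0 xs t.castSucc

variable {π : (t : Fin (T + 1)) → (∀ s, X s) → (∀ s, U s) → U t → ℝ}

lemma AdaptedPol.apply_zero_cons [∀ t, Nonempty (X t)] [∀ t, Nonempty (U t)]
    (hπ : AdaptedPol π) (x0 : X 0) (xs : ∀ s : Fin (T + 1), X s.succ) (us : ∀ s, U s) :
    π 0 (Fin.cons x0 xs) us = headPol π x0 := by
  refine hπ 0 _ _ _ _ (fun s hs => ?_) (fun s hs => absurd hs (Fin.not_lt_zero s))
  rw [nonpos_iff_eq_zero.mp hs]
  rfl

lemma ValidPol.headPol_nonneg [∀ t, Fintype (U t)] [∀ t, Nonempty (X t)] [∀ t, Nonempty (U t)]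
    (hπ : ValidPol π) (x0 : X 0) (u0 : U 0) : 0 ≤ headPol π x0 u0 :=
  hπ.1 0 _ _ u0

lemma ValidPol.sum_headPol [∀ t, Fintype (U t)] [∀ t, Nonempty (X t)] [∀ t, Nonempty (U t)]
    (hπ : ValidPol π) (x0 : X 0) : ∑ u0, headPol π x0 u0 = 1 :=
  hπ.2 0 _ _

lemma ValidPol.tailPol [∀ t, Fintype (U t)] (hπ : ValidPol π) (x0 : X 0) (u0 : U 0) :
    ValidPol (tailPol π x0 u0) :=
  ⟨fun t _ _ => hπ.1 t.succ _ _, fun t _ _ => hπ.2 t.succ _ _⟩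

lemma AdaptedPol.tailPol (hπ : AdaptedPol π) (x0 : X 0) (u0 : U 0) :
    AdaptedPol (tailPol π x0 u0) := by
  intro t xs xs' us us' hx hu
  refine hπ t.succ _ _ _ _ (fun s hs => ?_) (fun s hs => ?_)
  · cases s using Fin.cases with
    | zero => rfl
    | succ s => exact hx s (Fin.succ_le_succ_iff.mp hs)
  · cases s using Fin.cases with
    | zero => rfl
    | succ s => exact hu s (Fin.succ_lt_succ_iff.mp hs)

lemma headPol_detPol [∀ t, Nonempty (X t)] [∀ t, Nonempty (U t)]
    (d : (t : Fin (T + 1)) → X t.castSucc → U t) (x0 : X 0) (u0 : U 0) :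
    headPol (detPol d) x0 u0 = if u0 = d 0 x0 then 1 else 0 :=
  rfl

lemma tailPol_detPol (d : (t : Fin (T + 1)) → X t.castSucc → U t) (x0 : X 0) (u0 : U 0) :
    tailPol (detPol d) x0 u0 = detPol (X := fun s => X s.succ) fun t => d t.succ := by
  funext t xs us u
  simp only [tailPol, detPol, cons_castSucc_succ]

variable [∀ t, Fintype (X t)] [∀ t, Fintype (U t)]

lemma trajProb_cons (ν : X 0 → ℝ) (P : (t : Fin (T + 1)) → X t.castSucc → U t → X t.succ → ℝ)
    (x0 : X 0) (xs : ∀ s : Fin (T + 1), X s.succ) (u0 : U 0) (us : ∀ s : Fin T, U s.succ) :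
    trajProb ν P π (Fin.cons x0 xs, Fin.cons u0 us) =
      ν x0 * π 0 (Fin.cons x0 xs) (Fin.cons u0 us) u0 *
        trajProb (P 0 x0 u0) (tailP P) (tailPol π x0 u0) (xs, us) := by
  simp only [trajProb, Fin.prod_univ_succ, Fin.cons_zero, Fin.cons_succ, cons_castSucc_succ,
    Fin.castSucc_zero, tailP, tailPol]
  ring

lemma sum_traj_eq_sum_cons {M : Type*} [AddCommMonoid M]
    (F : (∀ t, X t) × (∀ t, U t) → M) :
    ∑ τ, F τ = ∑ x0, ∑ u0, ∑ τ' : (∀ s : Fin (T + 1), X s.succ) × (∀ s : Fin T, U s.succ),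
      F (Fin.cons x0 τ'.1, Fin.cons u0 τ'.2) := by
  rw [← Fintype.sum_equiv ((Equiv.prodProdProdComm _ _ _ _).trans
    ((Fin.consEquiv X).prodCongr (Fin.consEquiv U))) _ F fun _ => rfl]
  simp only [Fintype.sum_prod_type]
  rfl

lemma sum_trajProb_mul_eq_sum_cons [∀ t, Nonempty (X t)] [∀ t, Nonempty (U t)]
    (hπ : AdaptedPol π) (ν : X 0 → ℝ)
    (P : (t : Fin (T + 1)) → X t.castSucc → U t → X t.succ → ℝ)
    (G : (∀ t, X t) × (∀ t, U t) → ℝ) :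
    ∑ τ, trajProb ν P π τ * G τ = ∑ x0, ∑ u0, ν x0 * headPol π x0 u0 *
      ∑ τ', trajProb (P 0 x0 u0) (tailP P) (tailPol π x0 u0) τ' *
        G (Fin.cons x0 τ'.1, Fin.cons u0 τ'.2) := by
  simp only [sum_traj_eq_sum_cons, trajProb_cons, hπ.apply_zero_cons, Finset.mul_sum, mul_assoc]

end Tail

lemma sum_trajProb {T : ℕ} {X : Fin (T + 1) → Type*} {U : Fin T → Type*}
    [∀ t, Fintype (X t)] [∀ t, Fintype (U t)] [∀ t, Nonempty (X t)] [∀ t, Nonempty (U t)]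
    {π : (t : Fin T) → (∀ s, X s) → (∀ s, U s) → U t → ℝ} (hπ : ValidPol π)
    (hπ' : AdaptedPol π) (ν : X 0 → ℝ) (P : (t : Fin T) → X t.castSucc → U t → X t.succ → ℝ)
    (hP1 : ∀ t x u, ∑ x', P t x u x' = 1) :
    ∑ τ, trajProb ν P π τ = ∑ x, ν x := by
  induction T with
  | zero =>
    simp only [trajProb, Finset.univ_eq_empty, Finset.prod_empty, mul_one, Fintype.sum_prod_type,
      Finset.sum_const, Finset.card_univ, Fintype.card_unique, one_smul]
    exact Fintype.sum_equiv (Equiv.piUnique (α := Fin 1) X) _ _ fun _ => rfl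
  | succ T ih =>
    have h := sum_trajProb_mul_eq_sum_cons hπ' ν P fun _ => 1
    simp only [mul_one] at h
    rw [h]
    refine Finset.sum_congr rfl fun x0 _ => ?_
    simp only [ih (hπ.tailPol _ _) (hπ'.tailPol _ _) _ (tailP P) (fun t => hP1 t.succ)]
    calc _ = ν x0 * ∑ u0, headPol π x0 u0 := by simp only [hP1 0 x0, mul_one, Finset.mul_sum]
      _ = ν x0 := by rw [hπ.sum_headPol, mul_one]

lemma polReward_cons {T : ℕ} {X : Fin (T + 2) → Type*} {U : Fin (T + 1) → Type*}
    [∀ t, Fintype (X t)] [∀ t, Fintype (U t)] [∀ t, Nonempty (X t)] [∀ t, Nonempty (U t)]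
    {π : (t : Fin (T + 1)) → (∀ s, X s) → (∀ s, U s) → U t → ℝ} (hπ : ValidPol π)
    (hπ' : AdaptedPol π) (ν : X 0 → ℝ)
    (P : (t : Fin (T + 1)) → X t.castSucc → U t → X t.succ → ℝ)
    (hP1 : ∀ t x u, ∑ x', P t x u x' = 1) (r : (t : Fin (T + 1)) → X t.castSucc → U t → ℝ) :
    polReward ν P r π = ∑ x0, ∑ u0, ν x0 * headPol π x0 u0 *
      (r 0 x0 u0 + polReward (P 0 x0 u0) (tailP P) (tailR r) (tailPol π x0 u0)) := by
  rw [polReward, sum_trajProb_mul_eq_sum_cons hπ']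
  refine Finset.sum_congr rfl fun x0 _ => Finset.sum_congr rfl fun u0 _ => ?_
  have hmass := sum_trajProb (hπ.tailPol x0 u0) (hπ'.tailPol x0 u0) (P 0 x0 u0) (tailP P)
    fun t => hP1 t.succ
  simp only [Fin.sum_univ_succ, Fin.cons_zero, Fin.castSucc_zero, Fin.cons_succ,
    cons_castSucc_succ, mul_add, Finset.sum_add_distrib, ← Finset.sum_mul, hmass, hP1 0 x0 u0]
  simp only [polReward, tailR]
  ring

section Deterministic

variable {T : ℕ} {X : Fin (T + 1) → Type*} {U : Fin T → Type*}

lemma detPol_valid [∀ t, Fintype (U t)] (d : (t : Fin T) → X t.castSucc → U t) :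
    ValidPol (X := X) (detPol d) :=
  ⟨fun _ _ _ _ => by unfold detPol; positivity, fun _ _ _ => by simp [detPol]⟩

lemma detPol_adapted (d : (t : Fin T) → X t.castSucc → U t) : AdaptedPol (X := X) (detPol d) :=
  fun t _ _ _ _ hx _ => funext fun _ => by simp only [detPol, hx t.castSucc le_rfl]

end Deterministic

theorem polReward_le_of_bellman {T : ℕ} {X : Fin (T + 1) → Type*} {U : Fin T → Type*}
    [∀ t, Fintype (X t)] [∀ t, Fintype (U t)] [∀ t, Nonempty (X t)] [∀ t, Nonempty (U t)]
    {π : (t : Fin T) → (∀ s, X s) → (∀ s, U s) → U t → ℝ} (hπ : ValidPol π)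
    (hπ' : AdaptedPol π) {ν : X 0 → ℝ} (hν : ∀ x, 0 ≤ ν x)
    {P : (t : Fin T) → X t.castSucc → U t → X t.succ → ℝ} (hP0 : ∀ t x u x', 0 ≤ P t x u x')
    (hP1 : ∀ t x u, ∑ x', P t x u x' = 1) (r : (t : Fin T) → X t.castSucc → U t → ℝ)
    {V : (t : Fin (T + 1)) → X t → ℝ} (hVlast : ∀ x, 0 ≤ V (Fin.last T) x)
    (hVstep : ∀ t x u, r t x u + ∑ x', V t.succ x' * P t x u x' ≤ V t.castSucc x) :
    polReward ν P r π ≤ ∑ x, ν x * V 0 x := by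
  induction T with
  | zero =>
    simpa [polReward] using Finset.sum_nonneg fun x _ => mul_nonneg (hν x) (hVlast x)
  | succ T ih =>
    have hcont : ∀ x0 u0, r 0 x0 u0 + polReward (P 0 x0 u0) (tailP P) (tailR r) (tailPol π x0 u0)
        ≤ V 0 x0 := fun x0 u0 => calc
      _ ≤ r 0 x0 u0 + ∑ x', P 0 x0 u0 x' * V (Fin.succ 0) x' := by
        gcongr
        exact ih (hπ.tailPol x0 u0) (hπ'.tailPol x0 u0) (hP0 0 x0 u0) (fun t => hP0 t.succ)
          (fun t => hP1 t.succ) (tailR r) (V := fun t => V t.succ) hVlast fun t => hVstep t.succ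
      _ = r 0 x0 u0 + ∑ x', V (Fin.succ 0) x' * P 0 x0 u0 x' := by simp only [mul_comm]
      _ ≤ V 0 x0 := hVstep 0 x0 u0
    calc polReward ν P r π
        = ∑ x0, ∑ u0, ν x0 * headPol π x0 u0 *
            (r 0 x0 u0 + polReward (P 0 x0 u0) (tailP P) (tailR r) (tailPol π x0 u0)) :=
          polReward_cons hπ hπ' ν P hP1 r
      _ ≤ ∑ x0, ∑ u0, ν x0 * headPol π x0 u0 * V 0 x0 := by
        gcongr with x0 _ u0 _
        · exact mul_nonneg (hν x0) (hπ.headPol_nonneg x0 u0)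
        · exact hcont x0 u0
      _ = ∑ x0, ν x0 * V 0 x0 := by
        simp only [mul_right_comm _ _ (V 0 _), ← Finset.mul_sum, hπ.sum_headPol,
          mul_one]

theorem polReward_detPol_of_greedy {T : ℕ} {X : Fin (T + 1) → Type*} {U : Fin T → Type*}
    [∀ t, Fintype (X t)] [∀ t, Fintype (U t)] [∀ t, Nonempty (X t)] [∀ t, Nonempty (U t)]
    (ν : X 0 → ℝ) {P : (t : Fin T) → X t.castSucc → U t → X t.succ → ℝ}
    (hP1 : ∀ t x u, ∑ x', P t x u x' = 1) (r : (t : Fin T) → X t.castSucc → U t → ℝ)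
    {V : (t : Fin (T + 1)) → X t → ℝ} (hVlast : ∀ x, V (Fin.last T) x = 0)
    {d : (t : Fin T) → X t.castSucc → U t}
    (hd : ∀ t x, V t.castSucc x = r t x (d t x) + ∑ x', V t.succ x' * P t x (d t x) x') :
    polReward ν P r (detPol d) = ∑ x, ν x * V 0 x := by
  induction T with
  | zero =>
    simp only [polReward, Finset.univ_eq_empty, Finset.sum_empty, mul_zero, Finset.sum_const_zero]
    exact (Finset.sum_eq_zero fun x _ => by rw [show V 0 x = 0 from hVlast x, mul_zero]).symm
  | succ T ih =>
    rw [polReward_cons (detPol_valid d) (detPol_adapted d) ν P hP1 r]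
    refine Finset.sum_congr rfl fun x0 _ => ?_
    have hcont := fun u0 => ih (X := fun s => X s.succ) (U := fun s => U s.succ) (P 0 x0 u0)
      (P := tailP P) (fun t => hP1 t.succ) (tailR r) (V := fun t => V t.succ) hVlast
      fun t => hd t.succ
    simp only [tailPol_detPol, headPol_detPol, hcont, mul_ite, mul_one, mul_zero, ite_mul, zero_mul,
      Finset.sum_ite_eq', Finset.mem_univ, if_true]
    exact congrArg (ν x0 * ·)
      ((hd 0 x0).trans (congrArg _ (Finset.sum_congr rfl fun _ _ => mul_comm _ _))).symm

theorem exists_bellman_solution {T : ℕ} {X : Fin (T + 1) → Type*} {U : Fin T → Type*}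
    [∀ t, Fintype (X t)] [∀ t, Fintype (U t)] [∀ t, Nonempty (U t)]
    (P : (t : Fin T) → X t.castSucc → U t → X t.succ → ℝ)
    (r : (t : Fin T) → X t.castSucc → U t → ℝ) :
    ∃ V : (t : Fin (T + 1)) → X t → ℝ, (∀ x, V (Fin.last T) x = 0) ∧
      ∀ t x, V t.castSucc x = Finset.univ.sup' Finset.univ_nonempty
        fun u : U t => r t x u + ∑ x', V t.succ x' * P t x u x' := by
  induction T with
  | zero => exact ⟨fun _ _ => 0, fun _ => rfl, fun t => t.elim0⟩
  | succ T ih =>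
    obtain ⟨V, hVlast, hVstep⟩ := ih (X := fun s => X s.succ) (U := fun s => U s.succ) (tailP P)
      (tailR r)
    refine ⟨Fin.cons (α := fun t => X t → ℝ) (fun x => Finset.univ.sup' Finset.univ_nonempty
      fun u => r 0 x u + ∑ x', V 0 x' * P 0 x u x') V, hVlast, fun t x => ?_⟩
    cases t using Fin.cases with
    | zero => rfl
    | succ t => exact hVstep t x

theorem exists_greedy {T : ℕ} {X : Fin (T + 1) → Type*} {U : Fin T → Type*}
    [∀ t, Fintype (X t)] [∀ t, Fintype (U t)] [∀ t, Nonempty (U t)]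
    {P : (t : Fin T) → X t.castSucc → U t → X t.succ → ℝ}
    {r : (t : Fin T) → X t.castSucc → U t → ℝ} {V : (t : Fin (T + 1)) → X t → ℝ}
    (hV : ∀ t x, V t.castSucc x = Finset.univ.sup' Finset.univ_nonempty
        fun u : U t => r t x u + ∑ x', V t.succ x' * P t x u x') :
    ∃ d : (t : Fin T) → X t.castSucc → U t,
      ∀ t x, V t.castSucc x = r t x (d t x) + ∑ x', V t.succ x' * P t x (d t x) x' := by
  choose d _ hd using fun t x => Finset.exists_mem_eq_sup' Finset.univ_nonempty
    fun u : U t => r t x u + ∑ x', V t.succ x' * P t x u x'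
  exact ⟨d, fun t x => (hV t x).trans (hd t x)⟩

theorem stmt5_general {T : ℕ} {X : Fin (T + 1) → Type*} {U : Fin T → Type*}
    [∀ t, Fintype (X t)] [∀ t, Fintype (U t)]
    [∀ t, Nonempty (X t)] [∀ t, Nonempty (U t)]
    (ν : X 0 → ℝ) (hν0 : ∀ x, 0 ≤ ν x)
    (P : (t : Fin T) → X t.castSucc → U t → X t.succ → ℝ)
    (hP0 : ∀ t x u x', 0 ≤ P t x u x')
    (hP1 : ∀ t x u, ∑ x', P t x u x' = 1)
    (r : (t : Fin T) → X t.castSucc → U t → ℝ) :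
    -- (a) every history-dependent randomized policy is dominated by a deterministic
    -- Markov policy
    (∀ π, ValidPol (X := X) π → AdaptedPol π →
      ∃ d : (t : Fin T) → X t.castSucc → U t,
        polReward ν P r π ≤ polReward ν P r (detPol d)) ∧
    -- (b) for the value function `V` defined by backward induction, the maximum over
    -- deterministic Markov policies is attained, equals `E_{x₁ ∼ ν}[V₁(x₁)]`, and
    -- equals the supremum over all history-dependent randomized policies
    (∀ V : (t : Fin (T + 1)) → X t → ℝ,
      (∀ x, V (Fin.last T) x = 0) →
      (∀ (t : Fin T) (x : X t.castSucc),
        V t.castSucc x = Finset.univ.sup' Finset.univ_nonempty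
          (fun u : U t => r t x u + ∑ x' : X t.succ, V t.succ x' * P t x u x')) →
      (∃ d : (t : Fin T) → X t.castSucc → U t,
          polReward ν P r (detPol d) = ∑ x, ν x * V 0 x) ∧
      (∀ d : (t : Fin T) → X t.castSucc → U t,
          polReward ν P r (detPol d) ≤ ∑ x, ν x * V 0 x) ∧
      IsLUB {j : ℝ | ∃ π, ValidPol (X := X) π ∧ AdaptedPol π ∧ j = polReward ν P r π}
        (∑ x, ν x * V 0 x)) := by
  have optimal : ∀ V : (t : Fin (T + 1)) → X t → ℝ, (∀ x, V (Fin.last T) x = 0) →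
      (∀ t x, V t.castSucc x = Finset.univ.sup' Finset.univ_nonempty
        fun u : U t => r t x u + ∑ x', V t.succ x' * P t x u x') →
      (∀ π, ValidPol (X := X) π → AdaptedPol π → polReward ν P r π ≤ ∑ x, ν x * V 0 x) ∧
      ∃ d, polReward ν P r (detPol d) = ∑ x, ν x * V 0 x := fun V hVlast hV =>
    ⟨fun π hπ hπ' => polReward_le_of_bellman hπ hπ' hν0 hP0 hP1 r (fun x => (hVlast x).ge)
      fun t x u => (hV t x).symm ▸
        Finset.le_sup' (fun u => r t x u + ∑ x', V t.succ x' * P t x u x') (Finset.mem_univ u),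
     (exists_greedy hV).imp fun _ hd => polReward_detPol_of_greedy ν hP1 r hVlast hd⟩
  refine ⟨fun π hπ hπ' => ?_, fun V hVlast hV => ?_⟩
  · obtain ⟨V, hVlast, hV⟩ := exists_bellman_solution P r
    obtain ⟨hle, d, hd⟩ := optimal V hVlast hV
    exact ⟨d, (hle π hπ hπ').trans_eq hd.symm⟩
  · obtain ⟨hle, d, hd⟩ := optimal V hVlast hV
    refine ⟨⟨d, hd⟩, fun d' => hle _ (detPol_valid d') (detPol_adapted d'), ?_, ?_⟩
    · rintro _ ⟨π, hπ, hπ', rfl⟩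
      exact hle π hπ hπ'
    · exact fun b hb => hb ⟨detPol d, detPol_valid d, detPol_adapted d, hd.symm⟩

theorem stmt5 {T : ℕ} {X : Fin (T + 1) → Type*} {U : Fin T → Type*}
    [∀ t, Fintype (X t)] [∀ t, Fintype (U t)]
    [∀ t, Nonempty (X t)] [∀ t, Nonempty (U t)]
    (ν : X 0 → ℝ) (hν0 : ∀ x, 0 ≤ ν x) (hν1 : ∑ x, ν x = 1)
    (P : (t : Fin T) → X t.castSucc → U t → X t.succ → ℝ)
    (hP0 : ∀ t x u x', 0 ≤ P t x u x')
    (hP1 : ∀ t x u, ∑ x', P t x u x' = 1)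
    (r : (t : Fin T) → X t.castSucc → U t → ℝ) :
    -- (a) every history-dependent randomized policy is dominated by a deterministic
    -- Markov policy
    (∀ π, ValidPol (X := X) π → AdaptedPol π →
      ∃ d : (t : Fin T) → X t.castSucc → U t,
        polReward ν P r π ≤ polReward ν P r (detPol d)) ∧
    -- (b) for the value function `V` defined by backward induction, the maximum over
    -- deterministic Markov policies is attained, equals `E_{x₁ ∼ ν}[V₁(x₁)]`, and
    -- equals the supremum over all history-dependent randomized policies
    (∀ V : (t : Fin (T + 1)) → X t → ℝ,
      (∀ x, V (Fin.last T) x = 0) →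
      (∀ (t : Fin T) (x : X t.castSucc),
        V t.castSucc x = Finset.univ.sup' Finset.univ_nonempty
          (fun u : U t => r t x u + ∑ x' : X t.succ, V t.succ x' * P t x u x')) →
      (∃ d : (t : Fin T) → X t.castSucc → U t,
          polReward ν P r (detPol d) = ∑ x, ν x * V 0 x) ∧
      (∀ d : (t : Fin T) → X t.castSucc → U t,
          polReward ν P r (detPol d) ≤ ∑ x, ν x * V 0 x) ∧
      IsLUB {j : ℝ | ∃ π, ValidPol (X := X) π ∧ AdaptedPol π ∧ j = polReward ν P r π}
        (∑ x, ν x * V 0 x)) :=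
  stmt5_general ν hν0 P hP0 hP1 r

end
end

section
/- Let c ∈ (0, 1/3) and define J*(α₁, α₂) = (c/2)(1 − α₁ + α₂) + (1/2)(2 − α₁ − α₂) + (1/2)·min{2α₁ + α₂ − 1, 0} + (1/2)·min{α₁ + 2α₂ − 1, 0} for (α₁, α₂) ∈ [0,1]². Then J* attains its maximum over [0,1]² uniquely at (α₁, α₂) = (1/3, 1/3), with maximum value c/2 + 2/3. -/
open Set

/-- Alice's guaranteed payoff `J*(α) = min_β J(α, β)` in the two-stage zero-sum
signaling game. -/
noncomputable def Jstar (c α₁ α₂ : ℝ) : ℝ :=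
  c / 2 * (1 - α₁ + α₂) + 1 / 2 * (2 - α₁ - α₂) +
    1 / 2 * min (2 * α₁ + α₂ - 1) 0 + 1 / 2 * min (α₁ + 2 * α₂ - 1) 0

theorem stmt10 (c : ℝ) (hc : c ∈ Ioo (0:ℝ) (1/3)) :
    Jstar c (1/3) (1/3) = c / 2 + 2 / 3 ∧
    (∀ α₁ α₂ : ℝ, α₁ ∈ Icc (0:ℝ) 1 → α₂ ∈ Icc (0:ℝ) 1 →
      Jstar c α₁ α₂ ≤ c / 2 + 2 / 3) ∧
    (∀ α₁ α₂ : ℝ, α₁ ∈ Icc (0:ℝ) 1 → α₂ ∈ Icc (0:ℝ) 1 →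
      Jstar c α₁ α₂ = c / 2 + 2 / 3 → α₁ = 1/3 ∧ α₂ = 1/3) := by
  obtain ⟨hc0, hc1⟩ := hc
  refine ⟨by norm_num [Jstar], ?_, ?_⟩
  · intro a b ⟨ha0, ha1⟩ ⟨hb0, hb1⟩
    unfold Jstar
    rcases le_or_gt (2 * a + b - 1) 0 with h1 | h1 <;>
      rcases le_or_gt (a + 2 * b - 1) 0 with h2 | h2
    · rw [min_eq_left h1, min_eq_left h2]
      nlinarith [mul_nonneg hc0.le (sub_nonneg.2 ha0), mul_nonneg hc0.le (sub_nonneg.2 hb0),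
        mul_nonneg (sub_pos.2 hc1).le (sub_nonneg.2 ha0),
        mul_nonneg (sub_pos.2 hc1).le (sub_nonneg.2 hb0),
        mul_nonneg (sub_pos.2 hc1).le (neg_nonneg.2 h1),
        mul_nonneg (sub_pos.2 hc1).le (neg_nonneg.2 h2),
        mul_nonneg hc0.le (neg_nonneg.2 h1), mul_nonneg hc0.le (neg_nonneg.2 h2)]
    · rw [min_eq_left h1, min_eq_right h2.le]
      nlinarith [mul_nonneg (sub_pos.2 hc1).le (sub_nonneg.2 h2.le),
        mul_nonneg hc0.le (sub_nonneg.2 h2.le),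
        mul_nonneg (sub_pos.2 hc1).le (neg_nonneg.2 h1),
        mul_nonneg hc0.le (neg_nonneg.2 h1)]
    · rw [min_eq_right h1.le, min_eq_left h2]
      nlinarith [mul_nonneg (sub_pos.2 hc1).le (sub_nonneg.2 h1.le),
        mul_nonneg hc0.le (sub_nonneg.2 h1.le),
        mul_nonneg (sub_pos.2 hc1).le (neg_nonneg.2 h2),
        mul_nonneg hc0.le (neg_nonneg.2 h2)]
    · rw [min_eq_right h1.le, min_eq_right h2.le]
      nlinarith [mul_nonneg (sub_pos.2 hc1).le (sub_nonneg.2 h1.le),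
        mul_nonneg hc0.le (sub_nonneg.2 h1.le),
        mul_nonneg (sub_pos.2 hc1).le (sub_nonneg.2 h2.le),
        mul_nonneg hc0.le (sub_nonneg.2 h2.le)]
  · intro a b ⟨ha0, ha1⟩ ⟨hb0, hb1⟩ heq
    unfold Jstar at heq
    rcases le_or_gt (2 * a + b - 1) 0 with h1 | h1 <;>
      rcases le_or_gt (a + 2 * b - 1) 0 with h2 | h2
    · rw [min_eq_left h1, min_eq_left h2] at heq
      constructor <;> apply le_antisymm <;>
        nlinarith [mul_nonneg (sub_pos.2 hc1).le (neg_nonneg.2 h1),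
          mul_nonneg (sub_pos.2 hc1).le (neg_nonneg.2 h2),
          mul_nonneg hc0.le (neg_nonneg.2 h1), mul_nonneg hc0.le (neg_nonneg.2 h2),
          mul_nonneg hc0.le (sub_nonneg.2 ha0), mul_nonneg hc0.le (sub_nonneg.2 hb0)]
    · rw [min_eq_left h1, min_eq_right h2.le] at heq
      exfalso
      nlinarith [mul_pos (show (0:ℝ) < 1/3 - c by linarith) h2,
        mul_nonneg hc0.le (neg_nonneg.2 h1),
        mul_nonneg (show (0:ℝ) ≤ 1/3 - c by linarith) (neg_nonneg.2 h1)]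
    · rw [min_eq_right h1.le, min_eq_left h2] at heq
      exfalso
      nlinarith [mul_pos hc0 h1, mul_nonneg hc0.le (neg_nonneg.2 h2)]
    · rw [min_eq_right h1.le, min_eq_right h2.le] at heq
      exfalso
      nlinarith [mul_pos hc0 h1, mul_pos hc0 h2]
end

section
/- Let Ω be a finite probability space, T ∈ ℕ, and for each player i in a finite set I let (K_t^i)_{t=1}^T be random variables where K_t^i takes values in a finite set 𝒦_t^i. Suppose for each i, K^i is unilaterally sufficient information, i.e., for every strategy profile g the joint conditional law satisfies P^g(X_t = x, H_t = h | K_t^i = k) = F_t^{i,g^i}(h^i | k) · Φ_t^{i,g^{-i}}(x, h^{-i} | k) with F depending only on player i's own strategy g^i and Φ only on the others' strategies g^{-i}. Then for any two strategies g^i, ĝ^i of player i and any fixed strategies g^{-i} of the others, and any j ≠ i: if P^{(g^i, g^{-i})}(K_t^i = k) = P^{(ĝ^i, g^{-i})}(K_t^i = k) for all k ∈ 𝒦_t^i, then P^{(g^i, g^{-i})}(K_t^i = k | H_t^j = h^j) = P^{(ĝ^i, g^{-i})}(K_t^i = k | H_t^j = h^j) for all k and all h^j with positive probability under both profiles. 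-/
open Classical Finset

/-- Probability of an event under a pmf on a finite sample space. -/
noncomputable def Pr {Ω : Type*} [Fintype Ω] (p : Ω → ℝ) (E : Ω → Prop) : ℝ :=
  ∑ ω, if E ω then p ω else 0

lemma Pr_nonneg {Ω : Type*} [Fintype Ω] (p : Ω → ℝ) (h : ∀ ω, 0 ≤ p ω) (E : Ω → Prop) :
    0 ≤ Pr p E := Finset.sum_nonneg fun ω _ => by by_cases hE : E ω <;> simp [Pr, hE, h ω]

lemma Pr_mono {Ω : Type*} [Fintype Ω] (p : Ω → ℝ) (h : ∀ ω, 0 ≤ p ω) {E F : Ω → Prop}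
    (hEF : ∀ ω, E ω → F ω) : Pr p E ≤ Pr p F := by
  apply Finset.sum_le_sum
  intro ω _
  by_cases hE : E ω
  · simp [hE, hEF ω hE]
  · simp only [hE, if_false]; by_cases hF : F ω <;> simp [hF, h ω]

lemma Pr_congr {Ω : Type*} [Fintype Ω] (p : Ω → ℝ) {E F : Ω → Prop}
    (h : ∀ ω, E ω ↔ F ω) : Pr p E = Pr p F := by
  unfold Pr; exact Finset.sum_congr rfl fun ω _ => by rw [if_congr (h ω) rfl rfl]

lemma Pr_partition {Ω κ : Type*} [Fintype Ω] [Fintype κ] (p : Ω → ℝ) (E : Ω → Prop)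
    (f : Ω → κ) : Pr p E = ∑ k, Pr p (fun ω => E ω ∧ f ω = k) := by
  unfold Pr
  rw [Finset.sum_comm]
  refine Finset.sum_congr rfl fun ω _ => ?_
  by_cases hE : E ω
  · simp [hE]
  · simp [hE]

/-- `p` and `q` are the laws of the dynamic game (at a fixed time `t`) under the
strategy profiles `(gⁱ, g⁻ⁱ)` and `(ĝⁱ, g⁻ⁱ)` respectively.  `Hi`, `Hj`, `Hr` are the
information histories of player `i`, of a player `j ≠ i`, and of the remaining players;
`X` is the state and `Kⁱ = φ ∘ Hi` is player `i`'s compressed information.  Unilateral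
sufficiency of `Kⁱ` gives factorizations of both laws with the *same* factor `Φ`
(depending only on `g⁻ⁱ`), while the own-strategy factors `Fp`, `Fq` may differ. -/
theorem stmt15 {Ω 𝒳 ℋi ℋj ℋr 𝒦 : Type*}
    [Fintype Ω] [Fintype 𝒳] [Fintype ℋi] [Fintype ℋj] [Fintype ℋr] [Fintype 𝒦]
    (p q : Ω → ℝ)
    (hp0 : ∀ ω, 0 ≤ p ω) (hp1 : ∑ ω, p ω = 1)
    (hq0 : ∀ ω, 0 ≤ q ω) (hq1 : ∑ ω, q ω = 1)
    (X : Ω → 𝒳) (Hi : Ω → ℋi) (Hj : Ω → ℋj) (Hr : Ω → ℋr) (φ : ℋi → 𝒦)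
    (Fp Fq : ℋi → 𝒦 → ℝ) (Φ : 𝒳 → ℋj → ℋr → 𝒦 → ℝ)
    (hfactp : ∀ (x : 𝒳) (hi : ℋi) (hj : ℋj) (hr : ℋr) (k : 𝒦),
      0 < Pr p (fun ω => φ (Hi ω) = k) →
      Pr p (fun ω => X ω = x ∧ Hi ω = hi ∧ Hj ω = hj ∧ Hr ω = hr ∧ φ (Hi ω) = k) /
          Pr p (fun ω => φ (Hi ω) = k) = Fp hi k * Φ x hj hr k)
    (hfactq : ∀ (x : 𝒳) (hi : ℋi) (hj : ℋj) (hr : ℋr) (k : 𝒦),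
      0 < Pr q (fun ω => φ (Hi ω) = k) →
      Pr q (fun ω => X ω = x ∧ Hi ω = hi ∧ Hj ω = hj ∧ Hr ω = hr ∧ φ (Hi ω) = k) /
          Pr q (fun ω => φ (Hi ω) = k) = Fq hi k * Φ x hj hr k)
    (hF1p : ∀ k, ∑ hi, Fp hi k = 1) (hF1q : ∀ k, ∑ hi, Fq hi k = 1)
    (hmarg : ∀ k : 𝒦, Pr p (fun ω => φ (Hi ω) = k) = Pr q (fun ω => φ (Hi ω) = k)) :
    ∀ (k : 𝒦) (hj : ℋj),
      0 < Pr p (fun ω => Hj ω = hj) → 0 < Pr q (fun ω => Hj ω = hj) →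
      Pr p (fun ω => φ (Hi ω) = k ∧ Hj ω = hj) / Pr p (fun ω => Hj ω = hj) =
        Pr q (fun ω => φ (Hi ω) = k ∧ Hj ω = hj) / Pr q (fun ω => Hj ω = hj) := by
  intro k hj _ _
  -- numerator equality for every k
  have hnum : ∀ k : 𝒦,
      Pr p (fun ω => φ (Hi ω) = k ∧ Hj ω = hj) = Pr q (fun ω => φ (Hi ω) = k ∧ Hj ω = hj) := by
    intro k
    by_cases hk : Pr p (fun ω => φ (Hi ω) = k) = 0
    · have hkq : Pr q (fun ω => φ (Hi ω) = k) = 0 := (hmarg k) ▸ hk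
      have h1 : Pr p (fun ω => φ (Hi ω) = k ∧ Hj ω = hj) = 0 :=
        le_antisymm (hk ▸ Pr_mono p hp0 (fun ω h => h.1)) (Pr_nonneg p hp0 _)
      have h2 : Pr q (fun ω => φ (Hi ω) = k ∧ Hj ω = hj) = 0 :=
        le_antisymm (hkq ▸ Pr_mono q hq0 (fun ω h => h.1)) (Pr_nonneg q hq0 _)
      rw [h1, h2]
    · have hkp : 0 < Pr p (fun ω => φ (Hi ω) = k) :=
        (Pr_nonneg p hp0 _).lt_of_ne (Ne.symm hk)
      have hkq : 0 < Pr q (fun ω => φ (Hi ω) = k) := (hmarg k) ▸ hkp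
      have decomp : ∀ (r : Ω → ℝ),
          Pr r (fun ω => φ (Hi ω) = k ∧ Hj ω = hj) =
          ∑ t : 𝒳 × ℋi × ℋr,
            Pr r (fun ω => X ω = t.1 ∧ Hi ω = t.2.1 ∧ Hj ω = hj ∧ Hr ω = t.2.2 ∧
              φ (Hi ω) = k) := by
        intro r
        rw [Pr_partition r _ (fun ω => (X ω, Hi ω, Hr ω))]
        refine Finset.sum_congr rfl fun t _ => Pr_congr r fun ω => ?_
        simp only [Prod.ext_iff]
        tauto
      have sumS : ∀ (F : ℋi → 𝒦 → ℝ), (∑ hi, F hi k = 1) →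
          (∑ t : 𝒳 × ℋi × ℋr, F t.2.1 k * Φ t.1 hj t.2.2 k) =
            ∑ x, ∑ hr, Φ x hj hr k := by
        intro F hF
        rw [Fintype.sum_prod_type]
        refine Finset.sum_congr rfl fun x _ => ?_
        rw [Fintype.sum_prod_type, Finset.sum_comm]
        refine Finset.sum_congr rfl fun hr _ => ?_
        show (∑ hi, F hi k * Φ x hj hr k) = Φ x hj hr k
        rw [← Finset.sum_mul, hF, one_mul]
      have hvp : Pr p (fun ω => φ (Hi ω) = k ∧ Hj ω = hj) =
          (∑ x, ∑ hr, Φ x hj hr k) * Pr p (fun ω => φ (Hi ω) = k) := by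
        rw [decomp p, ← sumS Fp (hF1p k), Finset.sum_mul]
        refine Finset.sum_congr rfl fun t _ => ?_
        have := hfactp t.1 t.2.1 hj t.2.2 k hkp
        field_simp at this ⊢
        linarith [this]
      have hvq : Pr q (fun ω => φ (Hi ω) = k ∧ Hj ω = hj) =
          (∑ x, ∑ hr, Φ x hj hr k) * Pr q (fun ω => φ (Hi ω) = k) := by
        rw [decomp q, ← sumS Fq (hF1q k), Finset.sum_mul]
        refine Finset.sum_congr rfl fun t _ => ?_
        have := hfactq t.1 t.2.1 hj t.2.2 k hkq
        field_simp at this ⊢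
        linarith [this]
      rw [hvp, hvq, hmarg k]
  -- denominator equality
  have hden : Pr p (fun ω => Hj ω = hj) = Pr q (fun ω => Hj ω = hj) := by
    rw [Pr_partition p _ (fun ω => φ (Hi ω)), Pr_partition q _ (fun ω => φ (Hi ω))]
    refine Finset.sum_congr rfl fun k' _ => ?_
    calc Pr p (fun ω => Hj ω = hj ∧ φ (Hi ω) = k')
        = Pr p (fun ω => φ (Hi ω) = k' ∧ Hj ω = hj) := Pr_congr p fun ω => and_comm
      _ = Pr q (fun ω => φ (Hi ω) = k' ∧ Hj ω = hj) := hnum k'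
      _ = Pr q (fun ω => Hj ω = hj ∧ φ (Hi ω) = k') := Pr_congr q fun ω => and_comm
  rw [hnum k, hden]
end
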